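/- Let n ≥ 4 and let D be a linear map from n_{n,1} to itself, with matrix (D_{ab}) defined by D(e_a) = Σ_b D_{ab} e_b. Then D is a derivation of n_{n,1} (i.e. D([x,y]) = [D(x),y] + [x,D(y)] for all x,y) if and only if: (i) D_{ab} = 0 whenever b > a (the matrix is lower triangular); (ii) D_{ii} = (n−1−i) D_{nn} + D_{n−1,n−1} for all 1 ≤ i ≤ n−1; and (iii) D_{ji} = D_{j−i+1,1} for all 1 ≤ i < j ≤ n−1 (the entries D_{j1} for 2 ≤ j ≤ n−1 and D_{nk} for 1 ≤ k ≤ n−1, as well as D_{nn} and D_{n−1,n−1}, are arbitrary). -/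
import Mathlib

private lemma my_lie_sum (F : Type*) [Field F] {L : Type*} [LieRing L] [LieAlgebra F L]
    {ι : Type*} (x : L) (s : Finset ι) (f : ι → L) :
    ⁅x, ∑ i ∈ s, f i⁆ = ∑ i ∈ s, ⁅x, f i⁆ := by
  simp only [← LieAlgebra.ad_apply (R := F)]
  exact map_sum _ _ _

private lemma my_sum_lie (F : Type*) [Field F] {L : Type*} [LieRing L] [LieAlgebra F L]
    {ι : Type*} (y : L) (s : Finset ι) (f : ι → L) :
    ⁅∑ i ∈ s, f i, y⁆ = ∑ i ∈ s, ⁅f i, y⁆ := by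
  rw [← neg_neg ⁅∑ i ∈ s, f i, y⁆, lie_skew, my_lie_sum F, ← Finset.sum_neg_distrib]
  exact Finset.sum_congr rfl fun i _ => by rw [← lie_skew, neg_neg]

private lemma my_sum_Icc_one {V : Type*} [AddCommMonoid V] (n : ℕ) (f : ℕ → V) :
    ∑ b ∈ Finset.Icc 1 n, f b = ∑ i : Fin n, f (i.val + 1) := by
  induction n with
  | zero => simp
  | succ n ih =>
      rw [Finset.sum_Icc_succ_top (by omega), ih, Fin.sum_univ_castSucc]
      simp

private lemma my_sum_shift {V : Type*} [AddCommMonoid V] (m : ℕ) (f : ℕ → V) :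
    ∑ c ∈ Finset.Icc 2 (m + 1), f c = ∑ c ∈ Finset.Icc 1 m, f (c + 1) := by
  induction m with
  | zero => simp
  | succ m ih =>
      rw [Finset.sum_Icc_succ_top (by omega), ih, Finset.sum_Icc_succ_top (by omega)]

/-- The family `e 1, …, e n` is a basis of `L` realizing the Lie brackets of the
nilpotent Lie algebra `n_{n,1}`. -/
def IsNn1Basis (F : Type*) [Field F] (n : ℕ) {L : Type*} [LieRing L] [LieAlgebra F L]
    (e : ℕ → L) : Prop :=
  LinearIndependent F (fun i : Fin n => e (i.val + 1)) ∧
  Submodule.span F (Set.range (fun i : Fin n => e (i.val + 1))) = ⊤ ∧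
  (∀ j k : ℕ, 1 ≤ j → j ≤ n - 1 → 1 ≤ k → k ≤ n - 1 → ⁅e j, e k⁆ = 0) ∧
  ⁅e 1, e n⁆ = 0 ∧
  (∀ k : ℕ, 2 ≤ k → k ≤ n - 1 → ⁅e k, e n⁆ = e (k - 1))

/-- A linear map `D` of `n_{n,1}` with matrix `M` (i.e.
`D (e a) = Σ_b M a b • e b`) is a derivation iff `M` is lower triangular,
`M i i = (n-1-i) M n n + M (n-1) (n-1)` for `1 ≤ i ≤ n-1`, and
`M j i = M (j-i+1) 1` for `1 ≤ i < j ≤ n-1`. -/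
theorem nn1_derivation_characterization
    (F : Type*) [Field F] [CharZero F] (n : ℕ) (hn : 4 ≤ n)
    (L : Type*) [LieRing L] [LieAlgebra F L] (e : ℕ → L)
    (he : IsNn1Basis F n e)
    (D : L →ₗ[F] L) (M : ℕ → ℕ → F)
    (hM : ∀ a : ℕ, 1 ≤ a → a ≤ n → D (e a) = ∑ b ∈ Finset.Icc 1 n, M a b • e b) :
    (∀ x y : L, D ⁅x, y⁆ = ⁅D x, y⁆ + ⁅x, D y⁆) ↔
    ((∀ a b : ℕ, 1 ≤ a → a ≤ n → 1 ≤ b → b ≤ n → a < b → M a b = 0) ∧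
     (∀ i : ℕ, 1 ≤ i → i ≤ n - 1 →
        M i i = ((n - 1 - i : ℕ) : F) * M n n + M (n - 1) (n - 1)) ∧
     (∀ i j : ℕ, 1 ≤ i → i < j → j ≤ n - 1 → M j i = M (j - i + 1) 1)) := by
  obtain ⟨hli, hspan, hbr0, hbr1n, hbrk⟩ := he
  -- coefficient extraction
  have hcoeff : ∀ c : ℕ → F, (∑ b ∈ Finset.Icc 1 n, c b • e b = 0) →
      ∀ b, 1 ≤ b → b ≤ n → c b = 0 := by
    intro c h b hb1 hbn
    rw [my_sum_Icc_one] at h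
    have h2 := Fintype.linearIndependent_iff.mp hli (fun i => c (i.val + 1)) h ⟨b - 1, by omega⟩
    simpa [Nat.sub_add_cancel hb1] using h2
  have hcoeff2 : ∀ g h : ℕ → F,
      ((∑ c ∈ Finset.Icc 1 n, g c • e c = ∑ c ∈ Finset.Icc 1 n, h c • e c) ↔
        ∀ c, 1 ≤ c → c ≤ n → g c = h c) := by
    intro g h
    constructor
    · intro hgh c h1 h2
      have h0 : ∑ c ∈ Finset.Icc 1 n, (g c - h c) • e c = 0 := by
        simp only [sub_smul, Finset.sum_sub_distrib, hgh, sub_self]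
      have := hcoeff _ h0 c h1 h2
      exact sub_eq_zero.mp this
    · intro hc
      exact Finset.sum_congr rfl fun c hcm => by
        rw [Finset.mem_Icc] at hcm
        rw [hc c hcm.1 hcm.2]
  have hne : ∀ p, 1 ≤ p → p ≤ n → e p ≠ 0 := by
    intro p h1 h2
    have := hli.ne_zero ⟨p - 1, by omega⟩
    simpa [Nat.sub_add_cancel h1] using this
  have hpair : ∀ p q : ℕ, ∀ cp cq : F, 1 ≤ p → p ≤ n → 1 ≤ q → q ≤ n → p ≠ q →
      cp • e p - cq • e q = 0 → cp = 0 ∧ cq = 0 := by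
    intro p q cp cq hp1 hpn hq1 hqn hpq h
    have hsub : ({p, q} : Finset ℕ) ⊆ Finset.Icc 1 n := by
      intro x hx
      simp only [Finset.mem_insert, Finset.mem_singleton] at hx
      rcases hx with rfl | rfl <;> rw [Finset.mem_Icc] <;> omega
    have hsum : ∑ c ∈ Finset.Icc 1 n,
        (if c = p then cp else if c = q then -cq else 0) • e c = cp • e p - cq • e q := by
      rw [← Finset.sum_subset hsub]
      · rw [Finset.sum_pair hpq]
        simp [hpq, Ne.symm hpq, sub_eq_add_neg]
      · intro x _ hx2
        simp only [Finset.mem_insert, Finset.mem_singleton, not_or] at hx2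
        simp [hx2.1, hx2.2]
    have hz := hcoeff _ (by rw [hsum]; exact h)
    constructor
    · have := hz p hp1 hpn; simpa using this
    · have := hz q hq1 hqn; simpa [Ne.symm hpq] using this
  -- bracket expansions
  have hDan : ∀ a, 1 ≤ a → a ≤ n → ⁅D (e a), e n⁆
      = ∑ c ∈ Finset.Icc 1 n, (if c ≤ n - 2 then M a (c + 1) else 0) • e c := by
    intro a h1 h2
    rw [hM a h1 h2, my_sum_lie F]
    have e1 : ∑ c ∈ Finset.Icc 1 n, ⁅M a c • e c, e n⁆
        = ∑ c ∈ Finset.Icc 2 (n - 1), ⁅M a c • e c, e n⁆ := by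
      rw [← Finset.sum_subset (show Finset.Icc 2 (n - 1) ⊆ Finset.Icc 1 n from
        Finset.Icc_subset_Icc (by omega) (by omega))]
      intro x hx hx2
      rw [Finset.mem_Icc] at hx hx2
      rw [smul_lie]
      rcases Nat.lt_or_ge x 2 with h | h
      · have hx1 : x = 1 := by omega
        rw [hx1, hbr1n, smul_zero]
      · have hxn : x = n := by omega
        rw [hxn, lie_self, smul_zero]
    rw [e1]
    have e2 : ∑ c ∈ Finset.Icc 2 (n - 1), ⁅M a c • e c, e n⁆
        = ∑ c ∈ Finset.Icc 2 (n - 1), M a c • e (c - 1) :=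
      Finset.sum_congr rfl fun c hc => by
        rw [Finset.mem_Icc] at hc
        rw [smul_lie, hbrk c hc.1 hc.2]
    rw [e2]
    have e3 : ∑ c ∈ Finset.Icc 2 (n - 1), M a c • e (c - 1)
        = ∑ c ∈ Finset.Icc 1 (n - 2), (if c ≤ n - 2 then M a (c + 1) else 0) • e c := by
      have hh : n - 1 = (n - 2) + 1 := by omega
      rw [hh, my_sum_shift]
      exact Finset.sum_congr rfl fun c hc => by
        rw [Finset.mem_Icc] at hc
        rw [Nat.add_sub_cancel, if_pos hc.2]
    rw [e3]
    exact Finset.sum_subset (show Finset.Icc 1 (n - 2) ⊆ Finset.Icc 1 n from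
        Finset.Icc_subset_Icc (le_refl 1) (by omega))
      fun x hx hx2 => by
        rw [Finset.mem_Icc] at hx hx2
        rw [if_neg (by omega), zero_smul]
  have hDbn : ∀ a b, 1 ≤ a → a ≤ n - 1 → 1 ≤ b → b ≤ n →
      ⁅e a, D (e b)⁆ = M b n • ⁅e a, e n⁆ := by
    intro a b ha1 ha2 hb1 hb2
    rw [hM b hb1 hb2, my_lie_sum F]
    rw [Finset.sum_eq_single n]
    · rw [lie_smul]
    · intro c hc hcn
      rw [Finset.mem_Icc] at hc
      rw [lie_smul, hbr0 a c ha1 ha2 hc.1 (by omega), smul_zero]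
    · intro hn'
      exact absurd (Finset.mem_Icc.mpr ⟨by omega, le_refl n⟩) hn'
  have hDab : ∀ a b, 1 ≤ a → a ≤ n → 1 ≤ b → b ≤ n - 1 →
      ⁅D (e a), e b⁆ = -(M a n • ⁅e b, e n⁆) := by
    intro a b ha1 ha2 hb1 hb2
    rw [hM a ha1 ha2, my_sum_lie F]
    rw [Finset.sum_eq_single n]
    · rw [smul_lie, ← lie_skew, smul_neg]
    · intro c hc hcn
      rw [Finset.mem_Icc] at hc
      rw [smul_lie, hbr0 c b hc.1 (by omega) hb1 hb2, smul_zero]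
    · intro hn'
      exact absurd (Finset.mem_Icc.mpr ⟨by omega, le_refl n⟩) hn'
  have hsingle : ∀ (p : ℕ) (v : F), 1 ≤ p → p ≤ n →
      v • e p = ∑ c ∈ Finset.Icc 1 n, (if c = p then v else 0) • e c := by
    intro p v h1 h2
    have h1' : ∑ c ∈ Finset.Icc 1 n, (if c = p then v else 0) • e c
        = ∑ c ∈ Finset.Icc 1 n, (if c = p then v • e p else 0) :=
      Finset.sum_congr rfl fun c _ => by
        by_cases hc : c = p
        · subst hc; rw [if_pos rfl, if_pos rfl]
        · rw [if_neg hc, if_neg hc, zero_smul]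
    rw [h1', Finset.sum_ite_eq', if_pos (Finset.mem_Icc.mpr ⟨h1, h2⟩)]
  -- per-pair equations
  have hE1 : ∀ a b, 1 ≤ a → a ≤ n - 1 → 1 ≤ b → b ≤ n - 1 →
      ((D ⁅e a, e b⁆ = ⁅D (e a), e b⁆ + ⁅e a, D (e b)⁆) ↔
        -(M a n • ⁅e b, e n⁆) + M b n • ⁅e a, e n⁆ = 0) := by
    intro a b ha1 ha2 hb1 hb2
    rw [hbr0 a b ha1 ha2 hb1 hb2, map_zero, hDab a b ha1 (by omega) hb1 hb2,
      hDbn a b ha1 ha2 hb1 (by omega)]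
    exact eq_comm
  have hE2 : ∀ a, 2 ≤ a → a ≤ n - 1 →
      ((D ⁅e a, e n⁆ = ⁅D (e a), e n⁆ + ⁅e a, D (e n)⁆) ↔
        ∀ c, 1 ≤ c → c ≤ n → M (a - 1) c
          = (if c ≤ n - 2 then M a (c + 1) else 0) + (if c = a - 1 then M n n else 0)) := by
    intro a h2 hn1
    rw [hbrk a h2 hn1, hM (a - 1) (by omega) (by omega), hDan a (by omega) (by omega),
      hDbn a n (by omega) hn1 (by omega) (le_refl n), hbrk a h2 hn1,
      hsingle (a - 1) (M n n) (by omega) (by omega), ← Finset.sum_add_distrib]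
    simp_rw [← add_smul]
    exact hcoeff2 _ _
  have hE21 : (D ⁅e 1, e n⁆ = ⁅D (e 1), e n⁆ + ⁅e 1, D (e n)⁆) ↔
      ∀ c, 1 ≤ c → c ≤ n → (0 : F) = (if c ≤ n - 2 then M 1 (c + 1) else 0) := by
    rw [hbr1n, map_zero, hDan 1 (le_refl 1) (by omega),
      hDbn 1 n (le_refl 1) (by omega) (by omega) (le_refl n), hbr1n, smul_zero, add_zero]
    have h0 := hcoeff2 (fun _ => (0 : F)) (fun c => if c ≤ n - 2 then M 1 (c + 1) else 0)
    simp only [zero_smul, Finset.sum_const_zero] at h0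
    exact h0
  have hE4 : D ⁅e n, e n⁆ = ⁅D (e n), e n⁆ + ⁅e n, D (e n)⁆ := by
    rw [lie_self, map_zero, ← lie_skew (D (e n)) (e n)]
    exact (neg_add_cancel _).symm
  have hswap : ∀ x y : L, (D ⁅x, y⁆ = ⁅D x, y⁆ + ⁅x, D y⁆) ↔
      (D ⁅y, x⁆ = ⁅D y, x⁆ + ⁅y, D x⁆) := by
    have key : ∀ x y : L, (D ⁅x, y⁆ = ⁅D x, y⁆ + ⁅x, D y⁆) →
        (D ⁅y, x⁆ = ⁅D y, x⁆ + ⁅y, D x⁆) := by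
      intro x y h
      have h1 : ∀ u v : L, ⁅u, v⁆ = -⁅v, u⁆ := fun u v => by rw [← lie_skew u v]
      rw [h1 y x, h1 (D y) x, h1 y (D x), map_neg, h]
      abel
    exact fun x y => ⟨key x y, key y x⟩
  -- reduction to basis pairs
  have hred : (∀ x y : L, D ⁅x, y⁆ = ⁅D x, y⁆ + ⁅x, D y⁆) ↔
      (∀ a b, 1 ≤ a → a ≤ n → 1 ≤ b → b ≤ n →
        D ⁅e a, e b⁆ = ⁅D (e a), e b⁆ + ⁅e a, D (e b)⁆) := by
    constructor
    · intro h a b _ _ _ _; exact h _ _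
    · intro h x y
      set G : L →ₗ[F] L →ₗ[F] L := LinearMap.mk₂ F
        (fun x y => D ⁅x, y⁆ - ⁅D x, y⁆ - ⁅x, D y⁆)
        (fun m₁ m₂ m => by simp only [add_lie, map_add] <;> abel)
        (fun c m₁ m => by
          simp only [smul_lie, map_smul, smul_sub] <;> abel)
        (fun m m₁ m₂ => by simp only [lie_add, map_add] <;> abel)
        (fun c m m₁ => by simp only [lie_smul, map_smul, smul_sub] <;> abel)
        with hG
      have hG0 : G = 0 := by
        apply LinearMap.ext_on hspan
        rintro _ ⟨i, rfl⟩
        apply LinearMap.ext_on hspan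
        rintro _ ⟨j, rfl⟩
        have := h (i.val + 1) (j.val + 1) (by omega) (by omega) (by omega) (by omega)
        simp only [hG, LinearMap.mk₂_apply, LinearMap.zero_apply]
        rw [sub_sub, sub_eq_zero]
        exact this
      have : G x y = 0 := by rw [hG0]; rfl
      rw [hG, LinearMap.mk₂_apply, sub_sub, sub_eq_zero] at this
      exact this
  rw [hred]
  constructor
  · -- forward
    intro hE
    have hFA : ∀ a, 1 ≤ a → a ≤ n - 1 → M a n = 0 := by
      intro a h1 h2
      by_cases ha : a = 1
      · subst ha
        have h3 := (hE1 1 2 (le_refl 1) (by omega) (by omega) (by omega)).mp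
          (hE 1 2 (by omega) (by omega) (by omega) (by omega))
        rw [hbr1n, smul_zero, add_zero, hbrk 2 (le_refl 2) (by omega), neg_eq_zero] at h3
        have := hcoeff (fun c => if c = 1 then M 1 n else 0) (by
          rw [← hsingle 1 (M 1 n) (le_refl 1) (by omega)]
          simpa using h3) 1 (le_refl 1) (by omega)
        simpa using this
      · set b : ℕ := if a = 2 then 3 else 2 with hb
        have hb2 : 2 ≤ b := by rw [hb]; split <;> omega
        have hbn : b ≤ n - 1 := by rw [hb]; split <;> omega
        have hab : a ≠ b := by rw [hb]; split <;> omega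
        have h3 := (hE1 a b (by omega) h2 (by omega) hbn).mp
          (hE a b (by omega) (by omega) (by omega) (by omega))
        rw [hbrk a (by omega) h2, hbrk b hb2 hbn, neg_add_eq_sub, sub_eq_zero] at h3
        -- h3 : M b n • e (a-1) = M a n • e (b-1)
        exact (hpair (a - 1) (b - 1) (M b n) (M a n) (by omega) (by omega) (by omega)
          (by omega) (by omega) (sub_eq_zero.mpr h3)).2
    have hFC : ∀ a c, 2 ≤ a → a ≤ n - 1 → 1 ≤ c → c ≤ n →
        M (a - 1) c = (if c ≤ n - 2 then M a (c + 1) else 0)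
          + (if c = a - 1 then M n n else 0) := by
      intro a c h1 h2 hc1 hc2
      exact (hE2 a h1 h2).mp (hE a n (by omega) (by omega) (by omega) (le_refl n)) c hc1 hc2
    have hupper : ∀ k, ∀ a b, 1 ≤ a → a < b → b ≤ n → n - b = k → M a b = 0 := by
      intro k
      induction k with
      | zero =>
          intro a b h1 h2 h3 h4
          have hbn : b = n := by omega
          rw [hbn]
          exact hFA a h1 (by omega)
      | succ k ih =>
          intro a b h1 h2 h3 h4
          have hFCu := hFC (a + 1) b (by omega) (by omega) (by omega) (by omega)
          rw [show a + 1 - 1 = a from by omega, if_neg (show b ≠ a from by omega),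
            add_zero] at hFCu
          rw [hFCu]
          by_cases hc : b ≤ n - 2
          · rw [if_pos hc, ih (a + 1) (b + 1) (by omega) (by omega) (by omega) (by omega)]
          · rw [if_neg hc]
    have hi : ∀ a b : ℕ, 1 ≤ a → a ≤ n → 1 ≤ b → b ≤ n → a < b → M a b = 0 :=
      fun a b h1 _ _ h4 h5 => hupper (n - b) a b h1 h5 h4 rfl
    have hdiag : ∀ i, 1 ≤ i → i ≤ n - 2 → M i i = M (i + 1) (i + 1) + M n n := by
      intro i h1 h2
      have h3 := hFC (i + 1) i (by omega) (by omega) (by omega) (by omega)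
      rw [show i + 1 - 1 = i from by omega, if_pos rfl, if_pos h2] at h3
      exact h3
    have hii : ∀ k i, 1 ≤ i → i ≤ n - 1 → n - 1 - i = k →
        M i i = (k : F) * M n n + M (n - 1) (n - 1) := by
      intro k
      induction k with
      | zero =>
          intro i h1 h2 h3
          have hie : i = n - 1 := by omega
          subst hie
          simp
      | succ k ih =>
          intro i h1 h2 h3
          rw [hdiag i h1 (by omega), ih (i + 1) (by omega) (by omega) (by omega)]
          push_cast
          ring
    have hiii : ∀ i j : ℕ, 1 ≤ i → i < j → j ≤ n - 1 → M j i = M (j - i + 1) 1 := by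
      intro i
      induction i with
      | zero => intro j h; omega
      | succ i ih =>
          intro j h1 h2 h3
          by_cases hi0 : i = 0
          · subst hi0
            rw [show j - 1 + 1 = j from by omega]
          · have hFCu := hFC j i (by omega) (by omega) (by omega) (by omega)
            rw [if_pos (show i ≤ n - 2 from by omega),
              if_neg (show i ≠ j - 1 from by omega), add_zero] at hFCu
            rw [← hFCu, ih (j - 1) (by omega) (by omega) (by omega),
              show j - 1 - i + 1 = j - (i + 1) + 1 from by omega]
    exact ⟨hi, fun i h1 h2 => hii (n - 1 - i) i h1 h2 rfl, hiii⟩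
  · -- backward
    rintro ⟨hi, hii, hiii⟩
    have hEn : ∀ a, 1 ≤ a → a ≤ n - 1 →
        D ⁅e a, e n⁆ = ⁅D (e a), e n⁆ + ⁅e a, D (e n)⁆ := by
      intro a h1 h2
      by_cases h2' : 2 ≤ a
      · apply (hE2 a h2' h2).mpr
        intro c hc1 hcn
        rcases lt_trichotomy c (a - 1) with h | h | h
        · rw [if_pos (show c ≤ n - 2 from by omega),
            if_neg (show ¬(c = a - 1) from by omega), add_zero,
            hiii c (a - 1) hc1 h (by omega), hiii (c + 1) a (by omega) (by omega) h2,
            show a - 1 - c + 1 = a - (c + 1) + 1 from by omega]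
        · subst h
          rw [if_pos rfl, if_pos (show a - 1 ≤ n - 2 from by omega),
            show a - 1 + 1 = a from by omega, hii (a - 1) (by omega) (by omega),
            hii a (by omega) h2, show n - 1 - (a - 1) = (n - 1 - a) + 1 from by omega]
          push_cast
          ring
        · rw [if_neg (show ¬(c = a - 1) from by omega), add_zero]
          by_cases hc : c ≤ n - 2
          · rw [if_pos hc, hi (a - 1) c (by omega) (by omega) hc1 (by omega) h,
              hi a (c + 1) (by omega) (by omega) (by omega) (by omega) (by omega)]
          · rw [if_neg hc, hi (a - 1) c (by omega) (by omega) hc1 (by omega) h]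
      · have ha : a = 1 := by omega
        subst ha
        apply hE21.mpr
        intro c hc1 hcn
        by_cases hc : c ≤ n - 2
        · rw [if_pos hc, hi 1 (c + 1) (le_refl 1) (by omega) (by omega) (by omega) (by omega)]
        · rw [if_neg hc]
    intro a b ha1 ha2 hb1 hb2
    by_cases hbn : b ≤ n - 1
    · by_cases han : a ≤ n - 1
      · apply (hE1 a b ha1 han hb1 hbn).mpr
        rw [hi a n ha1 (by omega) (by omega) (le_refl n) (by omega),
          hi b n hb1 (by omega) (by omega) (le_refl n) (by omega)]
        simp
      · have ha : a = n := by omega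
        rw [ha]
        exact (hswap (e b) (e n)).mp (hEn b hb1 hbn)
    · have hb : b = n := by omega
      rw [hb]
      by_cases han : a ≤ n - 1
      · exact hEn a ha1 han
      · have ha : a = n := by omega
        rw [ha]
        exact hE4
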